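/- arXiv:1910.09493 — 2 statements merged into one kernel-verified Lean document; each statement's English description precedes it below -/
import Mathlib

section
/- Suppose the weighted empirical loss L_{α,n} satisfies the uniform RSC condition with parameters (γ, τ, α₀, r), and ρ_λ is a μ-amenable penalty with (3/4)μ < γ. Let β̂ be a stationary point of the program min_{‖β‖₁ ≤ R} {L_{α,n}(β) + ρ_λ(β)} satisfying ‖β̂ − β*‖₂ ≤ r, where β* is s-sparse. If R ≥ ‖β*‖₁, λ ≥ max{4‖∇L_{α,n}(β*)‖_∞, 8τ R (log p)/n}, and n ≥ C₀ r^{−2} k log p for a universal constant C₀ (k the exponent from Assumption 2(iii)), then ‖β̂ − β*‖₂ ≤ 24λ√s/(4γ − 3μ) and ‖β̂ − β*‖₁ ≤ 96λ s/(4γ − 3μ). -/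
open MeasureTheory ProbabilityTheory Filter Real
open scoped RealInnerProductSpace

noncomputable section

/-- The ℓ¹ norm of a vector. -/
def l1Norm {p : ℕ} (β : EuclideanSpace ℝ (Fin p)) : ℝ := ∑ j, |β j|

/-- The ℓ^∞ norm of a vector. -/
def supNorm {p : ℕ} (β : EuclideanSpace ℝ (Fin p)) : ℝ := ⨆ j, |β j|

/-- Assumption 2 of the paper: a family of robust losses `l α` with first derivative `l' α`
(everywhere) and second derivative `l'' α` (almost everywhere). -/
structure LossAssumption (l l' l'' : ℝ → ℝ → ℝ) (k₁ k₂ d₁ : ℝ) (k : ℕ) : Prop where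
  k₁_pos : 0 < k₁
  k₂_pos : 0 < k₂
  d₁_pos : 0 < d₁
  k_ge_two : 2 ≤ k
  hasDeriv : ∀ α > (0:ℝ), ∀ u : ℝ, HasDerivAt (l α) (l' α u) u
  hasDeriv2 : ∀ α > (0:ℝ), ∀ᵐ u ∂(volume : Measure ℝ), HasDerivAt (l' α) (l'' α u) u
  deriv_bound : ∀ α > (0:ℝ), ∀ u : ℝ, |l' α u| ≤ k₁ * α
  deriv_zero : ∀ α > (0:ℝ), l' α 0 = 0
  lipschitz : ∀ α > (0:ℝ), LipschitzWith k₂.toNNReal (l' α)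
  second_deriv_approx : ∀ α > (0:ℝ), ∀ᵐ u ∂(volume : Measure ℝ),
    |u| ≤ α → |1 - l'' α u| ≤ d₁ * |u| ^ k / α ^ k

/-- A random real variable is sub-Gaussian with variance proxy `σ2`. -/
def SubGaussianWith {Ω : Type*} [MeasurableSpace Ω] (μ : Measure Ω) (X : Ω → ℝ) (σ2 : ℝ) :
    Prop :=
  ∀ t : ℝ, ∫ ω, Real.exp (t * X ω) ∂μ ≤ Real.exp (σ2 * t ^ 2 / 2)

/-- Assumption 3 of the paper, for a single observation `(x, ε)` with weight functions
`w, v`. -/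
structure MomentAssumption {Ω : Type*} [MeasurableSpace Ω] (μ : Measure Ω) {p : ℕ}
    (x : Ω → EuclideanSpace ℝ (Fin p)) (ε : Ω → ℝ)
    (w v : EuclideanSpace ℝ (Fin p) → ℝ)
    (k : ℕ) (Mk qk kl ku k₀ : ℝ) : Prop where
  mean_zero : ∀ j, ∫ ω, x ω j ∂μ = 0
  cond_mean_zero : μ[ε | MeasurableSpace.comap x inferInstance] =ᵐ[μ] 0
  cond_moment : ∫ ω, ((μ[fun ω' => |ε ω'| ^ k | MeasurableSpace.comap x inferInstance]) ω
      * (v (x ω)) ^ k) ^ 2 ∂μ ≤ Mk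
  dir_moment : ∀ u : EuclideanSpace ℝ (Fin p), ‖u‖ = 1 →
      ∫ ω, (v (x ω) * ⟪x ω, u⟫) ^ (2 * k) ∂μ ≤ qk
  kl_pos : 0 < kl
  eig_lower : ∀ ν : EuclideanSpace ℝ (Fin p), ν ≠ 0 →
      kl * ‖ν‖ ^ 2 < ∫ ω, w (x ω) * v (x ω) * ⟪x ω, ν⟫ ^ 2 ∂μ
  eig_upper : ∀ ν : EuclideanSpace ℝ (Fin p), ν ≠ 0 →
      (∫ ω, (w (x ω)) ^ 2 * ⟪x ω, ν⟫ ^ 2 ∂μ) < ku * ‖ν‖ ^ 2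
  subgaussian : ∀ ν : EuclideanSpace ℝ (Fin p),
      SubGaussianWith μ (fun ω => w (x ω) * ⟪x ω, ν⟫) (k₀ ^ 2 * ‖ν‖ ^ 2)

/-- The weighted empirical loss `L_{α,n}` built from realized data `(X i, Y i)`. -/
def empLoss {p n : ℕ} (X : Fin n → EuclideanSpace ℝ (Fin p)) (Y : Fin n → ℝ)
    (w v : EuclideanSpace ℝ (Fin p) → ℝ) (l : ℝ → ℝ → ℝ) (α : ℝ)
    (β : EuclideanSpace ℝ (Fin p)) : ℝ :=
  (1 / (n : ℝ)) * ∑ i, (w (X i) / v (X i)) * l α ((Y i - ⟪X i, β⟫) * v (X i))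

/-- The coordinatewise "gradient" of a separable penalty. -/
def penGrad {p : ℕ} (ρ : ℝ → ℝ) (β : EuclideanSpace ℝ (Fin p)) : EuclideanSpace ℝ (Fin p) :=
  (EuclideanSpace.equiv (Fin p) ℝ).symm fun j => deriv ρ (β j)

/-- A `μa`-amenable penalty with regularization level `lam` (Assumption 1(i)-(vi)). -/
structure AmenablePenalty (ρ : ℝ → ℝ) (lam μa : ℝ) : Prop where
  symm : ∀ t : ℝ, ρ (-t) = ρ t
  zero : ρ 0 = 0
  mono : MonotoneOn ρ (Set.Ici 0)
  ratio_anti : AntitoneOn (fun t => ρ t / t) (Set.Ioi 0)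
  differentiable : ∀ t : ℝ, t ≠ 0 → DifferentiableAt ℝ ρ t
  deriv_lim : Tendsto (deriv ρ) (nhdsWithin 0 (Set.Ioi 0)) (nhds lam)
  conv : ConvexOn ℝ Set.univ fun t => ρ t + μa / 2 * t ^ 2

/-- Stationary point of the penalized program with side constraint `‖β‖₁ ≤ R`. -/
def StationaryPoint {p : ℕ} (L : EuclideanSpace ℝ (Fin p) → ℝ) (ρ : ℝ → ℝ) (R : ℝ)
    (βt : EuclideanSpace ℝ (Fin p)) : Prop :=
  l1Norm βt ≤ R ∧ ∃ U ∈ nhds βt, ∀ β ∈ U, l1Norm β ≤ R →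
    0 ≤ ⟪gradient L βt + penGrad ρ βt, β - βt⟫

/-- The uniform restricted strong convexity condition (Assumption 4). -/
def UniformRSC {p : ℕ} (L : ℝ → EuclideanSpace ℝ (Fin p) → ℝ)
    (βstar : EuclideanSpace ℝ (Fin p)) (γ τ α₀ r : ℝ) (n : ℕ) : Prop :=
  ∀ α : ℝ, α₀ ≤ α → ∀ β₁ β₂ : EuclideanSpace ℝ (Fin p),
    ‖β₁ - βstar‖ ≤ r → ‖β₂ - βstar‖ ≤ r →
    γ * ‖β₁ - β₂‖ ^ 2 - τ * (Real.log p / n) * (l1Norm (β₁ - β₂)) ^ 2 ≤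
      ⟪gradient (L α) β₁ - gradient (L α) β₂, β₁ - β₂⟫

/-!
Write `ν = β̂ - β*` and `S` for the support of `β*`. Testing stationarity against the feasible
point `β*` and adding the RSC inequality at `(β̂, β*)` gives
`γ‖ν‖₂² ≤ ⟪ρ'(β̂), β* - β̂⟫ + (λ/2)‖ν‖₁`: the choice of `λ` absorbs `⟪∇L(β*), ν⟫` and, since
`‖ν‖₁ ≤ 2R`, the RSC tolerance. Weak convexity of `ρ_λ` bounds the penalty term coordinatewise,
by `λ|ν_j| + (μ/2)ν_j²` on `S` and by `-(3λ/4)|ν_j| + (3μ/4)ν_j²` off `S`. This yields the cone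
inequality `(4γ - 3μ)‖ν‖₂² + λ‖ν_{Sᶜ}‖₁ ≤ 6λ‖ν_S‖₁`, and with `‖ν_S‖₁ ≤ √s‖ν‖₂` it gives
`‖ν‖₂ ≤ 6λ√s/(4γ - 3μ)` and `‖ν‖₁ ≤ 7‖ν_S‖₁ ≤ 42λs/(4γ - 3μ)`.
-/

theorem ConvexOn.add_mul_sub_le_of_hasDerivAt {f : ℝ → ℝ} {f' a : ℝ}
    (hf : ConvexOn ℝ Set.univ f) (hd : HasDerivAt f f' a) (b : ℝ) :
    f a + f' * (b - a) ≤ f b := by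
  rcases lt_trichotomy a b with hab | rfl | hab
  · have := hf.le_slope_of_hasDerivAt (Set.mem_univ a) (Set.mem_univ b) hab hd
    rw [slope_def_field, le_div_iff₀ (sub_pos.mpr hab)] at this
    linarith
  · simp
  · have := hf.slope_le_of_hasDerivAt (Set.mem_univ b) (Set.mem_univ a) hab hd
    rw [slope_def_field, div_le_iff₀ (sub_pos.mpr hab)] at this
    linarith

namespace AmenablePenalty

variable {ρ : ℝ → ℝ} {lam μa : ℝ}

theorem continuous (h : AmenablePenalty ρ lam μa) : Continuous ρ := by
  have hconv : Continuous fun t : ℝ => ρ t + μa / 2 * t ^ 2 :=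
    continuousOn_univ.mp (h.conv.continuousOn isOpen_univ)
  have hquad : Continuous fun t : ℝ => μa / 2 * t ^ 2 := by fun_prop
  exact (hconv.sub hquad).congr fun t => by simp

theorem apply_abs (h : AmenablePenalty ρ lam μa) (t : ℝ) : ρ |t| = ρ t := by
  rcases abs_choice t with ht | ht <;> rw [ht]
  exact h.symm t

theorem nonneg (h : AmenablePenalty ρ lam μa) (t : ℝ) : 0 ≤ ρ t := by
  rw [← h.apply_abs, ← h.zero]
  exact h.mono Set.self_mem_Ici (abs_nonneg t) (abs_nonneg t)

theorem add_le (h : AmenablePenalty ρ lam μa) (x y : ℝ) : ρ (x + y) ≤ ρ x + ρ y := by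
  have hpos : ∀ a b : ℝ, 0 < a → 0 < b → ρ (a + b) ≤ ρ a + ρ b := by
    intro a b ha hb
    have hab : 0 < a + b := add_pos ha hb
    have ha' := h.ratio_anti ha hab (le_add_of_nonneg_right hb.le)
    have hb' := h.ratio_anti hb hab (le_add_of_nonneg_left ha.le)
    simp only [div_le_div_iff₀ hab ha, div_le_div_iff₀ hab hb] at ha' hb'
    nlinarith
  have habs : ρ (|x| + |y|) ≤ ρ |x| + ρ |y| := by
    rcases (abs_nonneg x).eq_or_lt with hx | hx
    · rw [← hx, zero_add, h.zero, zero_add]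
    rcases (abs_nonneg y).eq_or_lt with hy | hy
    · rw [← hy, add_zero, h.zero, add_zero]
    exact hpos _ _ hx hy
  rw [← h.apply_abs, ← h.apply_abs x, ← h.apply_abs y]
  exact (h.mono (abs_nonneg (x + y)) (add_nonneg (abs_nonneg x) (abs_nonneg y))
    (abs_add_le x y)).trans habs

theorem tendsto_div_self (h : AmenablePenalty ρ lam μa) :
    Tendsto (fun t => ρ t / t) (nhdsWithin 0 (Set.Ioi 0)) (nhds lam) := by
  have hρ0 : Tendsto ρ (nhdsWithin 0 (Set.Ioi 0)) (nhds 0) :=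
    (h.continuous.tendsto' 0 0 h.zero).mono_left nhdsWithin_le_nhds
  refine deriv.lhopital_zero_nhdsGT ?_ (by simp) hρ0
    (tendsto_nhdsWithin_of_tendsto_nhds tendsto_id) (by simpa using h.deriv_lim)
  filter_upwards [self_mem_nhdsWithin] with t (ht : 0 < t)
  exact h.differentiable t ht.ne'

theorem div_self_le (h : AmenablePenalty ρ lam μa) {u : ℝ} (hu : 0 < u) : ρ u / u ≤ lam := by
  refine ge_of_tendsto h.tendsto_div_self ?_
  filter_upwards [Ioo_mem_nhdsGT hu] with t ht
  exact h.ratio_anti ht.1 hu ht.2.le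

theorem le_mul_abs (h : AmenablePenalty ρ lam μa) (t : ℝ) : ρ t ≤ lam * |t| := by
  rw [← h.apply_abs]
  rcases (abs_nonneg t).eq_or_lt with ht | ht
  · rw [← ht, h.zero, mul_zero]
  · exact (div_le_iff₀ ht).mp (h.div_self_le ht)

theorem lam_nonneg (h : AmenablePenalty ρ lam μa) : 0 ≤ lam := by
  simpa using (h.nonneg 1).trans (h.le_mul_abs 1)

theorem mul_abs_le (h : AmenablePenalty ρ lam μa) (t : ℝ) :
    lam * |t| ≤ ρ t + μa / 2 * t ^ 2 := by
  set f : ℝ → ℝ := fun t => ρ t + μa / 2 * t ^ 2 with hf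
  have hf_tendsto : Tendsto (fun t => f t / t) (nhdsWithin 0 (Set.Ioi 0)) (nhds lam) := by
    have hlin : Tendsto (fun t : ℝ => μa / 2 * t) (nhdsWithin 0 (Set.Ioi 0)) (nhds 0) :=
      tendsto_nhdsWithin_of_tendsto_nhds (by simpa using (continuous_const_mul (μa / 2)).tendsto 0)
    have hsum : Tendsto (fun t => ρ t / t + μa / 2 * t) (nhdsWithin 0 (Set.Ioi 0)) (nhds lam) := by
      simpa using h.tendsto_div_self.add hlin
    refine hsum.congr' ?_
    filter_upwards [self_mem_nhdsWithin] with t (ht : 0 < t)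
    simp only [hf]
    field_simp
  -- the slopes `f u / u` of the convex function `f` (with `f 0 = 0`) increase in `u`
  have hslope : ∀ u : ℝ, 0 < u → lam ≤ f u / u := by
    intro u hu
    refine le_of_tendsto hf_tendsto ?_
    filter_upwards [Ioo_mem_nhdsGT hu] with s hs
    simpa [hf, h.zero] using h.conv.secant_mono (Set.mem_univ 0) (Set.mem_univ s)
      (Set.mem_univ u) hs.1.ne' hu.ne' hs.2.le
  have hf_abs : f |t| = f t := by simp [hf, h.apply_abs]
  change lam * |t| ≤ f t
  rw [← hf_abs]
  rcases (abs_nonneg t).eq_or_lt with ht | ht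
  · simp [← ht, hf, h.zero]
  · exact (le_div_iff₀ ht).mp (hslope _ ht)

theorem deriv_neg (h : AmenablePenalty ρ lam μa) (t : ℝ) : deriv ρ (-t) = -deriv ρ t := by
  have := deriv_comp_neg ρ (-t)
  simp only [h.symm, neg_neg] at this
  linarith

theorem deriv_zero (h : AmenablePenalty ρ lam μa) : deriv ρ 0 = 0 := by
  have := h.deriv_neg 0
  rw [neg_zero] at this
  linarith

theorem mul_deriv_nonneg (h : AmenablePenalty ρ lam μa) (a : ℝ) : 0 ≤ a * deriv ρ a := by
  have hpos : ∀ a : ℝ, 0 < a → 0 ≤ deriv ρ a := by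
    intro a ha
    rw [← derivWithin_of_mem_nhds (Ici_mem_nhds ha)]
    exact h.mono.derivWithin_nonneg
  rcases lt_trichotomy a 0 with ha | rfl | ha
  · have := hpos (-a) (neg_pos.mpr ha)
    rw [h.deriv_neg] at this
    nlinarith
  · simp
  · exact mul_nonneg ha.le (hpos a ha)

theorem deriv_mul_sub_le (h : AmenablePenalty ρ lam μa) (a b : ℝ) :
    deriv ρ a * (b - a) ≤ ρ b - ρ a + μa / 2 * (b - a) ^ 2 := by
  rcases eq_or_ne a 0 with rfl | ha
  · simpa [h.deriv_zero, h.zero] using (mul_nonneg h.lam_nonneg (abs_nonneg b)).trans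
      (h.mul_abs_le b)
  have hd := (h.differentiable a ha).hasDerivAt.fun_add ((hasDerivAt_pow 2 a).const_mul (μa / 2))
  have := h.conv.add_mul_sub_le_of_hasDerivAt hd b
  norm_num at this
  linarith

theorem deriv_mul_sub_le_mul_abs (h : AmenablePenalty ρ lam μa) (a b : ℝ) :
    deriv ρ a * (b - a) ≤ lam * |b - a| + μa / 2 * (b - a) ^ 2 := by
  have hsub : ρ b ≤ ρ (b - a) + ρ a := by simpa using h.add_le (b - a) a
  linarith [h.deriv_mul_sub_le a b, h.le_mul_abs (b - a)]

theorem neg_mul_deriv_le (h : AmenablePenalty ρ lam μa) (a : ℝ) :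
    -(a * deriv ρ a) ≤ -(3 * lam / 4) * |a| + 3 * μa / 4 * a ^ 2 := by
  -- a `3 : 1` combination of the weak-convexity bound and `0 ≤ a ρ'(a)`
  have hconv := h.deriv_mul_sub_le a 0
  rw [h.zero] at hconv
  linarith [h.mul_abs_le a, h.mul_deriv_nonneg a]

end AmenablePenalty

section Vectors

variable {p : ℕ}

theorem inner_eq_sum_mul (a b : EuclideanSpace ℝ (Fin p)) : ⟪a, b⟫ = ∑ j, a j * b j := by
  simp [PiLp.inner_apply, mul_comm]

theorem l1Norm_nonneg (a : EuclideanSpace ℝ (Fin p)) : 0 ≤ l1Norm a :=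
  Finset.sum_nonneg fun j _ => abs_nonneg (a j)

theorem l1Norm_neg (a : EuclideanSpace ℝ (Fin p)) : l1Norm (-a) = l1Norm a := by
  simp [l1Norm]

theorem l1Norm_sub_le (a b : EuclideanSpace ℝ (Fin p)) :
    l1Norm (a - b) ≤ l1Norm a + l1Norm b := by
  simp only [l1Norm, ← Finset.sum_add_distrib, PiLp.sub_apply]
  exact Finset.sum_le_sum fun j _ => abs_sub (a j) (b j)

theorem inner_le_supNorm_mul_l1Norm (a b : EuclideanSpace ℝ (Fin p)) :
    ⟪a, b⟫ ≤ supNorm a * l1Norm b := by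
  rw [inner_eq_sum_mul, l1Norm, Finset.mul_sum]
  refine Finset.sum_le_sum fun j _ => ?_
  have hj : |a j| ≤ supNorm a := le_ciSup (Set.finite_range fun i => |a i|).bddAbove j
  calc a j * b j ≤ |a j| * |b j| := by rw [← abs_mul]; exact le_abs_self _
    _ ≤ supNorm a * |b j| := mul_le_mul_of_nonneg_right hj (abs_nonneg _)

theorem l1Norm_eq_sum_add_sum_compl (a : EuclideanSpace ℝ (Fin p)) (S : Finset (Fin p)) :
    l1Norm a = ∑ j ∈ S, |a j| + ∑ j ∈ Sᶜ, |a j| :=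
  (Finset.sum_add_sum_compl S _).symm

theorem sum_abs_le_sqrt_card_mul_norm (a : EuclideanSpace ℝ (Fin p)) (S : Finset (Fin p)) :
    ∑ j ∈ S, |a j| ≤ √S.card * ‖a‖ := by
  have hsq : ∑ j ∈ S, |a j| ^ 2 ≤ ‖a‖ ^ 2 := by
    rw [EuclideanSpace.real_norm_sq_eq]
    simp only [sq_abs]
    exact Finset.sum_le_sum_of_subset_of_nonneg (Finset.subset_univ S)
      fun j _ _ => sq_nonneg (a j)
  refine abs_le_of_sq_le_sq' ?_ (by positivity) |>.2
  calc (∑ j ∈ S, |a j|) ^ 2 ≤ S.card * ∑ j ∈ S, |a j| ^ 2 := sq_sum_le_card_mul_sum_sq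
    _ ≤ S.card * ‖a‖ ^ 2 := by gcongr
    _ = (√S.card * ‖a‖) ^ 2 := by rw [mul_pow, Real.sq_sqrt (Nat.cast_nonneg _)]

theorem convex_setOf_l1Norm_le (R : ℝ) :
    Convex ℝ {β : EuclideanSpace ℝ (Fin p) | l1Norm β ≤ R} := by
  intro x hx y hy a b ha hb hab
  calc l1Norm (a • x + b • y) ≤ ∑ j, (a * |x j| + b * |y j|) := by
        refine Finset.sum_le_sum fun j _ => ?_
        simpa [abs_mul, abs_of_nonneg ha, abs_of_nonneg hb] using abs_add_le (a * x j) (b * y j)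
    _ = a * l1Norm x + b * l1Norm y := by
        simp only [l1Norm, Finset.sum_add_distrib, Finset.mul_sum]
    _ ≤ a * R + b * R := by gcongr <;> assumption
    _ = R := by rw [← add_mul, hab, one_mul]

end Vectors

theorem inner_sub_nonneg_of_forall_mem_nhds {E : Type*} [NormedAddCommGroup E]
    [InnerProductSpace ℝ E] {C U : Set E} {g x y : E} (hC : Convex ℝ C) (hx : x ∈ C)
    (hy : y ∈ C) (hU : U ∈ nhds x) (h : ∀ z ∈ U, z ∈ C → 0 ≤ ⟪g, z - x⟫) :
    0 ≤ ⟪g, y - x⟫ := by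
  have hseg : Tendsto (fun t : ℝ => x + t • (y - x)) (nhdsWithin 0 (Set.Ioi 0)) (nhds x) := by
    have hcont : Continuous fun t : ℝ => x + t • (y - x) := by fun_prop
    simpa using (hcont.tendsto 0).mono_left nhdsWithin_le_nhds
  obtain ⟨t, ⟨hzU, ht⟩⟩ := ((hseg.eventually hU).and (Ioo_mem_nhdsGT one_pos)).exists
  have hz := h _ hzU (hC.add_smul_sub_mem hx hy ⟨ht.1.le, ht.2.le⟩)
  rw [add_sub_cancel_left, real_inner_smul_right] at hz
  exact nonneg_of_mul_nonneg_right hz ht.1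

theorem StationaryPoint.inner_nonneg {p : ℕ} {L : EuclideanSpace ℝ (Fin p) → ℝ} {ρ : ℝ → ℝ}
    {R : ℝ} {βt β : EuclideanSpace ℝ (Fin p)} (h : StationaryPoint L ρ R βt) (hβ : l1Norm β ≤ R) :
    0 ≤ ⟪gradient L βt + penGrad ρ βt, β - βt⟫ :=
  let ⟨hβt, _, hU, hstat⟩ := h
  inner_sub_nonneg_of_forall_mem_nhds (convex_setOf_l1Norm_le R) hβt hβ hU hstat

section ErrorBounds

variable {p : ℕ} {ρ : ℝ → ℝ} {lam μa : ℝ} {βhat βstar : EuclideanSpace ℝ (Fin p)}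
  {S : Finset (Fin p)}

@[simp]
theorem penGrad_apply (β : EuclideanSpace ℝ (Fin p)) (j : Fin p) :
    penGrad ρ β j = deriv ρ (β j) :=
  rfl

theorem AmenablePenalty.inner_penGrad_sub_le (h : AmenablePenalty ρ lam μa) (hμ : 0 ≤ μa)
    (hS : ∀ j ∉ S, βstar j = 0) :
    ⟪penGrad ρ βhat, βstar - βhat⟫ ≤
      lam * ∑ j ∈ S, |(βhat - βstar) j| - 3 * lam / 4 * ∑ j ∈ Sᶜ, |(βhat - βstar) j|
        + 3 * μa / 4 * ‖βhat - βstar‖ ^ 2 := by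
  set ν := βhat - βstar
  have hon : ∀ j ∈ S, deriv ρ (βhat j) * (βstar j - βhat j) ≤
      lam * |ν j| + 3 * μa / 4 * ν j ^ 2 := by
    intro j _
    have hνj : ν j = βhat j - βstar j := rfl
    have := h.deriv_mul_sub_le_mul_abs (βhat j) (βstar j)
    rw [abs_sub_comm] at this
    rw [hνj]
    linarith [mul_nonneg hμ (sq_nonneg (βhat j - βstar j))]
  have hoff : ∀ j ∈ Sᶜ, deriv ρ (βhat j) * (βstar j - βhat j) ≤
      -(3 * lam / 4) * |ν j| + 3 * μa / 4 * ν j ^ 2 := by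
    intro j hj
    have hνj : ν j = βhat j := by simp [ν, hS j (Finset.mem_compl.mp hj)]
    rw [hνj, hS j (Finset.mem_compl.mp hj), zero_sub, mul_neg, mul_comm]
    exact h.neg_mul_deriv_le (βhat j)
  have hsum := add_le_add (Finset.sum_le_sum hon) (Finset.sum_le_sum hoff)
  rw [Finset.sum_add_sum_compl] at hsum
  have hnorm : ‖ν‖ ^ 2 = ∑ j ∈ S, ν j ^ 2 + ∑ j ∈ Sᶜ, ν j ^ 2 := by
    rw [EuclideanSpace.real_norm_sq_eq, Finset.sum_add_sum_compl]
  simp only [Finset.sum_add_distrib, ← Finset.mul_sum] at hsum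
  rw [hnorm, inner_eq_sum_mul]
  simp only [penGrad_apply, PiLp.sub_apply]
  linarith

theorem StationaryPoint.cone_inequality {L : EuclideanSpace ℝ (Fin p) → ℝ} {γ t R : ℝ}
    (hstat : StationaryPoint L ρ R βhat) (hpen : AmenablePenalty ρ lam μa) (hμ : 0 ≤ μa)
    (hS : ∀ j ∉ S, βstar j = 0) (hR : l1Norm βstar ≤ R) (ht : 0 ≤ t)
    (hrsc : γ * ‖βhat - βstar‖ ^ 2 - t * l1Norm (βhat - βstar) ^ 2 ≤
      ⟪gradient L βhat - gradient L βstar, βhat - βstar⟫)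
    (hgrad : 4 * supNorm (gradient L βstar) ≤ lam) (htol : 8 * t * R ≤ lam) :
    (4 * γ - 3 * μa) * ‖βhat - βstar‖ ^ 2 + lam * ∑ j ∈ Sᶜ, |(βhat - βstar) j| ≤
      6 * lam * ∑ j ∈ S, |(βhat - βstar) j| := by
  set ν := βhat - βstar
  have hfirst := hstat.inner_nonneg hR
  have hflip : ⟪gradient L βhat, βstar - βhat⟫ = -⟪gradient L βhat, ν⟫ := by
    rw [← inner_neg_right, neg_sub]
  rw [inner_add_left, hflip] at hfirst
  have hgradstar : -⟪gradient L βstar, ν⟫ ≤ lam / 4 * l1Norm ν := by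
    have := inner_le_supNorm_mul_l1Norm (gradient L βstar) (-ν)
    rw [inner_neg_right, l1Norm_neg] at this
    exact this.trans (mul_le_mul_of_nonneg_right (by linarith) (l1Norm_nonneg ν))
  have htol' : t * l1Norm ν ^ 2 ≤ lam / 4 * l1Norm ν := by
    have hν : l1Norm ν ≤ 2 * R := by linarith [l1Norm_sub_le βhat βstar, hstat.1]
    calc t * l1Norm ν ^ 2 = t * l1Norm ν * l1Norm ν := by ring
      _ ≤ lam / 4 * l1Norm ν := mul_le_mul_of_nonneg_right
          ((mul_le_mul_of_nonneg_left hν ht).trans (by linarith)) (l1Norm_nonneg ν)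
  have hsplit : lam * l1Norm ν = lam * ∑ j ∈ S, |ν j| + lam * ∑ j ∈ Sᶜ, |ν j| := by
    rw [l1Norm_eq_sum_add_sum_compl ν S, mul_add]
  rw [inner_sub_left] at hrsc
  linarith [hpen.inner_penGrad_sub_le (βhat := βhat) hμ hS]

theorem norm_le_and_l1Norm_le_of_cone {ν : EuclideanSpace ℝ (Fin p)} {s : ℕ} {D : ℝ}
    (hS : S.card ≤ s) (hD : 0 < D) (hlam : 0 ≤ lam)
    (hcone : D * ‖ν‖ ^ 2 + lam * ∑ j ∈ Sᶜ, |ν j| ≤ 6 * lam * ∑ j ∈ S, |ν j|) :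
    ‖ν‖ ≤ 6 * lam * √s / D ∧ l1Norm ν ≤ 42 * lam * s / D := by
  have hA : ∑ j ∈ S, |ν j| ≤ √s * ‖ν‖ :=
    (sum_abs_le_sqrt_card_mul_norm ν S).trans (by gcongr)
  have hB : 0 ≤ lam * ∑ j ∈ Sᶜ, |ν j| :=
    mul_nonneg hlam (Finset.sum_nonneg fun j _ => abs_nonneg (ν j))
  have hnorm : ‖ν‖ ≤ 6 * lam * √s / D := by
    rw [le_div_iff₀ hD]
    rcases (norm_nonneg ν).eq_or_lt with h0 | hpos
    · rw [← h0, zero_mul]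
      positivity
    · have : D * ‖ν‖ * ‖ν‖ ≤ 6 * lam * √s * ‖ν‖ := by
        nlinarith [mul_le_mul_of_nonneg_left hA (by positivity : (0 : ℝ) ≤ 6 * lam)]
      linarith [le_of_mul_le_mul_right this hpos]
  refine ⟨hnorm, ?_⟩
  rcases hlam.eq_or_lt with rfl | hlam_pos
  · have : ν = 0 := norm_le_zero_iff.mp (by simpa using hnorm)
    simp [this, l1Norm]
  · have hB' : ∑ j ∈ Sᶜ, |ν j| ≤ 6 * ∑ j ∈ S, |ν j| := by
      refine le_of_mul_le_mul_left ?_ hlam_pos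
      nlinarith [mul_nonneg hD.le (sq_nonneg ‖ν‖)]
    have hs : √s * √s = (s : ℝ) := Real.mul_self_sqrt (Nat.cast_nonneg s)
    calc l1Norm ν = ∑ j ∈ S, |ν j| + ∑ j ∈ Sᶜ, |ν j| := l1Norm_eq_sum_add_sum_compl ν S
      _ ≤ 7 * (√s * ‖ν‖) := by linarith
      _ ≤ 7 * (√s * (6 * lam * √s / D)) := by gcongr
      _ = 42 * lam * (√s * √s) / D := by ring
      _ = 42 * lam * s / D := by rw [hs]

end ErrorBounds

/-- Theorem 2(ii): there is a universal constant `C₀ > 0` such that, if the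
weighted empirical loss satisfies the uniform RSC condition, `ρ_λ` is `μ`-amenable with
`(3/4)μ < γ`, `β̂` is a stationary point of the `ℓ₁`-constrained penalized program with
`‖β̂ − β*‖₂ ≤ r`, `β*` is `s`-sparse, `R ≥ ‖β*‖₁`,
`λ ≥ max{4‖∇L_{α,n}(β*)‖_∞, 8τR log p/n}` and `n ≥ C₀ r⁻² k log p`, then
`‖β̂ − β*‖₂ ≤ 24λ√s/(4γ − 3μ)` and `‖β̂ − β*‖₁ ≤ 96λs/(4γ − 3μ)`. -/
theorem statement_2 :
    ∃ C₀ : ℝ, 0 < C₀ ∧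
    ∀ (p n s : ℕ) (k : ℕ) (k₁ k₂ d₁ γ τ α₀ r μa lam R α : ℝ)
      (βstar βhat : EuclideanSpace ℝ (Fin p))
      (X : Fin n → EuclideanSpace ℝ (Fin p)) (Y : Fin n → ℝ)
      (w v : EuclideanSpace ℝ (Fin p) → ℝ)
      (l l' l'' : ℝ → ℝ → ℝ) (ρ : ℝ → ℝ),
      1 ≤ n → 2 ≤ p → 0 < γ → 0 < τ → 0 < r → 0 ≤ μa →
      LossAssumption l l' l'' k₁ k₂ d₁ k →
      (Finset.univ.filter fun j => βstar j ≠ 0).card ≤ s →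
      UniformRSC (fun a => empLoss X Y w v l a) βstar γ τ α₀ r n →
      α₀ ≤ α →
      AmenablePenalty ρ lam μa → 3 / 4 * μa < γ →
      StationaryPoint (empLoss X Y w v l α) ρ R βhat →
      ‖βhat - βstar‖ ≤ r →
      l1Norm βstar ≤ R →
      max (4 * supNorm (gradient (empLoss X Y w v l α) βstar))
        (8 * τ * R * (Real.log p / n)) ≤ lam →
      C₀ * r⁻¹ ^ 2 * k * Real.log p ≤ n →
      ‖βhat - βstar‖ ≤ 24 * lam * Real.sqrt s / (4 * γ - 3 * μa) ∧
      l1Norm (βhat - βstar) ≤ 96 * lam * s / (4 * γ - 3 * μa) := by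
  refine ⟨1, one_pos, ?_⟩
  intro p n s k k₁ k₂ d₁ γ τ α₀ r μa lam R α βstar βhat X Y w v l l' l'' ρ
    _ _ _ hτ hr hμ _ hsparse hRSC hα hpen hμγ hstat hβr hR hlam _
  have hD : 0 < 4 * γ - 3 * μa := by linarith
  have hlam_nonneg := hpen.lam_nonneg
  have htol : 0 ≤ τ * (Real.log p / n) := by
    have := Real.log_natCast_nonneg p
    positivity
  have hcone := hstat.cone_inequality hpen hμ (S := Finset.univ.filter fun j => βstar j ≠ 0)
    (fun j hj => by simpa using hj) hR htol
    (hRSC α hα βhat βstar hβr (by simpa using hr.le))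
    ((le_max_left _ _).trans hlam) (by linarith [(le_max_right _ _).trans hlam])
  obtain ⟨hnorm, hl1⟩ := norm_le_and_l1Norm_le_of_cone hsparse hD hlam_nonneg hcone
  exact ⟨hnorm.trans (by gcongr; norm_num), hl1.trans (by gcongr; norm_num)⟩
end
end

section
/- Fix α > 0 and let l_α satisfy Assumption 2 with constants k₁, k₂, d₁ and exponent k ≥ 2. Let Z be a real random variable with E|Z|^k < ∞. Then E[|Z − l'_α(Z)|] ≤ C₁ α^{1−k} E[|Z|^k], where C₁ = d₁/(k+1) + 1 + k₁. -/
open MeasureTheory Filter Real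

noncomputable section

open Topology Set intervalIntegral

/-- Average of a continuous function converges to its value. -/
lemma avg_tendsto (g : ℝ → ℝ) (hg : Continuous g) (c : ℝ) :
    Tendsto (fun t : ℝ => (∫ x in c..(c + t), g x) / t) (𝓝[≠] (0:ℝ)) (𝓝 (g c)) := by
  have hF : HasDerivAt (fun u => ∫ x in c..u, g x) (g c) c :=
    intervalIntegral.integral_hasDerivAt_right (hg.intervalIntegrable _ _)
      (hg.stronglyMeasurableAtFilter _ _) hg.continuousAt
  have hs := hasDerivAt_iff_tendsto_slope.1 hF
  have hmap : Tendsto (fun t : ℝ => c + t) (𝓝[≠] (0:ℝ)) (𝓝[≠] c) := by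
    apply Tendsto.inf
    · simpa using (continuous_add_left c).tendsto (0:ℝ)
    · rw [tendsto_principal_principal]
      intro t ht
      simp only [Set.mem_compl_iff, Set.mem_singleton_iff] at *
      intro hc; exact ht (by linarith)
  have := hs.comp hmap
  convert this using 2 with t
  simp [Function.comp, slope, intervalIntegral.integral_same, div_eq_inv_mul]

/-- FTC for Lipschitz functions with a.e. derivative. -/
lemma lipschitz_ftc (g : ℝ → ℝ) (L : NNReal) (hg : LipschitzWith L g)
    (hd : ∀ᵐ x ∂(volume : Measure ℝ), DifferentiableAt ℝ g x) (a b : ℝ) (hab : a ≤ b) :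
    g b - g a = ∫ x in Set.Ioc a b, deriv g x := by
  have hgc : Continuous g := hg.continuous
  set hn : ℕ → ℝ := fun n => 1 / (n + 1) with hhn
  have hnpos : ∀ n, 0 < hn n := fun n => by positivity
  have hhn0 : Tendsto hn atTop (𝓝[≠] (0:ℝ)) := by
    apply tendsto_nhdsWithin_of_tendsto_nhds_of_eventually_within
    · exact tendsto_one_div_add_atTop_nhds_zero_nat
    · exact Eventually.of_forall fun n => (hnpos n).ne'
  set F : ℕ → ℝ → ℝ := fun n x => (g (x + hn n) - g x) / hn n with hF
  -- interval integral of F n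
  have key : ∀ n, ∫ x in Set.Ioc a b, F n x =
      (∫ x in b..(b + hn n), g x) / hn n - (∫ x in a..(a + hn n), g x) / hn n := by
    intro n
    have h1 : ∫ x in Set.Ioc a b, F n x = ∫ x in a..b, F n x :=
      (intervalIntegral.integral_of_le hab).symm
    have hint : ∀ c d : ℝ, IntervalIntegrable g volume c d := fun c d =>
      hgc.intervalIntegrable c d
    have h2 : ∫ x in a..b, g (x + hn n) = ∫ x in (a + hn n)..(b + hn n), g x :=
      intervalIntegral.integral_comp_add_right g (hn n)
    have h3 : (∫ x in a..b, g x) + ∫ x in b..(b + hn n), g x = ∫ x in a..(b + hn n), g x :=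
      intervalIntegral.integral_add_adjacent_intervals (hint a b) (hint b _)
    have h4 : (∫ x in a..(a + hn n), g x) + ∫ x in (a + hn n)..(b + hn n), g x
        = ∫ x in a..(b + hn n), g x :=
      intervalIntegral.integral_add_adjacent_intervals (hint a _) (hint _ _)
    have h5 : ∫ x in a..b, F n x
        = ((∫ x in a..b, g (x + hn n)) - ∫ x in a..b, g x) / hn n := by
      rw [← intervalIntegral.integral_sub ((show Continuous fun x => g (x + hn n) from hgc.comp (by continuity)).intervalIntegrable a b) (hint a b)]
      simp only [hF, intervalIntegral.integral_div]
    rw [h1, h5, h2]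
    field_simp
    congr 1; linarith
  have lim1 : Tendsto (fun n => ∫ x in Set.Ioc a b, F n x) atTop (𝓝 (g b - g a)) := by
    simp only [key]
    exact ((avg_tendsto g hgc b).comp hhn0).sub ((avg_tendsto g hgc a).comp hhn0)
  have lim2 : Tendsto (fun n => ∫ x in Set.Ioc a b, F n x) atTop
      (𝓝 (∫ x in Set.Ioc a b, deriv g x)) := by
    apply MeasureTheory.tendsto_integral_of_dominated_convergence (fun _ => (L : ℝ))
    · intro n
      exact ((hgc.comp (continuous_id.add continuous_const)).sub hgc).div_const _
        |>.aestronglyMeasurable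
    · exact integrable_const _
    · intro n
      refine Eventually.of_forall fun x => ?_
      have := hg.dist_le_mul (x + hn n) x
      rw [Real.dist_eq, Real.dist_eq] at this
      simp only [add_sub_cancel_left, abs_of_pos (hnpos n)] at this
      rw [Real.norm_eq_abs, hF, abs_div, abs_of_pos (hnpos n)]
      exact div_le_of_le_mul₀ (hnpos n).le L.2 (by linarith)
    · have hd' : ∀ᵐ x ∂(volume : Measure ℝ), Tendsto (fun n => F n x) atTop (𝓝 (deriv g x)) := by
        filter_upwards [hd] with x hx
        have hs := hasDerivAt_iff_tendsto_slope.1 hx.hasDerivAt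
        have hmap : Tendsto (fun n => x + hn n) atTop (𝓝[≠] x) := by
          apply tendsto_nhdsWithin_of_tendsto_nhds_of_eventually_within
          · simpa using tendsto_const_nhds.add (hhn0.mono_right nhdsWithin_le_nhds)
          · exact Eventually.of_forall fun n => by
              simp only [Set.mem_compl_iff, Set.mem_singleton_iff]
              have := hnpos n; intro hc; linarith [hc]
        have := hs.comp hmap
        convert this using 2 with n
        simp [hF, Function.comp, slope, div_eq_inv_mul]
      exact hd'.filter_mono (ae_mono Measure.restrict_le_self)
  exact tendsto_nhds_unique lim1 lim2

/-- under Assumption 2, for a random variable `Z` with `E|Z|^k < ∞`,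
`E|Z − l'_α(Z)| ≤ C₁ α^{1−k} E|Z|^k` with `C₁ = d₁/(k+1) + 1 + k₁`. -/
theorem statement_13 {Ω : Type*} [MeasurableSpace Ω] (μ : Measure Ω) [IsProbabilityMeasure μ]
    (l l' l'' : ℝ → ℝ → ℝ) (k₁ k₂ d₁ : ℝ) (k : ℕ)
    (h : LossAssumption l l' l'' k₁ k₂ d₁ k)
    (α : ℝ) (hα : 0 < α)
    (Z : Ω → ℝ) (hZmeas : Measurable Z) (hZ : Integrable (fun ω => |Z ω| ^ k) μ) :
    ∫ ω, |Z ω - l' α (Z ω)| ∂μ ≤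
      (d₁ / (k + 1) + 1 + k₁) * α ^ ((1:ℝ) - k) * ∫ ω, |Z ω| ^ k ∂μ := by
  have hl'c : Continuous (l' α) := (h.lipschitz α hα).continuous
  set g : ℝ → ℝ := fun u => u - l' α u with hgdef
  have hgL : LipschitzWith (1 + k₂.toNNReal) g :=
    LipschitzWith.id.sub (h.lipschitz α hα)
  have hdiff : ∀ᵐ u ∂(volume : Measure ℝ), DifferentiableAt ℝ g u :=
    (h.hasDeriv2 α hα).mono fun u hu => ((hasDerivAt_id u).sub hu).differentiableAt
  have hderiv_eq : ∀ᵐ u ∂(volume : Measure ℝ), deriv g u = 1 - l'' α u :=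
    (h.hasDeriv2 α hα).mono fun u hu => ((hasDerivAt_id u).sub hu).deriv
  have hbd : ∀ᵐ u ∂(volume : Measure ℝ), |u| ≤ α → |deriv g u| ≤ d₁ * |u| ^ k / α ^ k := by
    filter_upwards [hderiv_eq, h.second_deriv_approx α hα] with u h1 h2 hu
    rw [h1]; exact h2 hu
  have hg0 : g 0 = 0 := by simp [hgdef, h.deriv_zero α hα]
  have hαk : (0:ℝ) < α ^ k := pow_pos hα k
  have hk1 : (0:ℝ) < (k:ℝ) + 1 := by positivity
  set A : ℝ := α ^ ((1:ℝ) - k) with hAdef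
  have hA : A = α / α ^ k := by
    rw [hAdef, Real.rpow_sub hα, Real.rpow_one, Real.rpow_natCast]
  have hA0 : 0 ≤ A := Real.rpow_nonneg hα.le _
  set C : ℝ := d₁ / (k + 1) + 1 + k₁ with hCdef
  have hC0 : 0 < C := by
    have := h.d₁_pos; have := h.k₁_pos; positivity
  -- FTC bound for |z| ≤ α
  have hsmall : ∀ z : ℝ, |z| ≤ α → |g z| ≤ d₁ * |z| ^ (k + 1) / ((k + 1) * α ^ k) := by
    intro z hz
    rcases le_or_gt 0 z with hz0 | hz0
    · have hftc := lipschitz_ftc g _ hgL hdiff 0 z hz0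
      rw [hg0, sub_zero] at hftc
      have hle : |∫ x in Set.Ioc 0 z, deriv g x| ≤
          ∫ x in Set.Ioc 0 z, d₁ * x ^ k / α ^ k := by
        rw [← Real.norm_eq_abs]
        apply MeasureTheory.norm_integral_le_of_norm_le
        · exact ((continuous_const.mul (continuous_pow k)).div_const _).integrableOn_Ioc
        · filter_upwards [ae_restrict_mem measurableSet_Ioc, ae_restrict_of_ae hbd]
            with x hx hbx
          have h1 : |x| = x := abs_of_pos hx.1
          have h2 : |x| ≤ α := by rw [h1]; exact hx.2.trans (le_of_abs_le hz)
          have := hbx h2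
          rw [h1] at this
          simpa using this
      have hcomp : ∫ x in Set.Ioc 0 z, d₁ * x ^ k / α ^ k
          = d₁ * z ^ (k + 1) / ((k + 1) * α ^ k) := by
        rw [← intervalIntegral.integral_of_le hz0]
        have : ∀ x : ℝ, d₁ * x ^ k / α ^ k = (d₁ / α ^ k) * x ^ k := by
          intro x; ring
        simp_rw [this]
        rw [intervalIntegral.integral_const_mul, integral_pow,
          zero_pow (Nat.succ_ne_zero k), sub_zero, div_mul_div_comm, mul_comm (α ^ k)]
      rw [hftc, abs_of_nonneg hz0]
      exact hle.trans_eq hcomp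
    · have hftc := lipschitz_ftc g _ hgL hdiff z 0 hz0.le
      rw [hg0, zero_sub] at hftc
      have hgz : g z = -∫ x in Set.Ioc z 0, deriv g x := by linarith [hftc]
      have hle : |∫ x in Set.Ioc z 0, deriv g x| ≤
          ∫ x in Set.Ioc z 0, d₁ * (-x) ^ k / α ^ k := by
        rw [← Real.norm_eq_abs]
        apply MeasureTheory.norm_integral_le_of_norm_le
        · exact ((continuous_const.mul ((continuous_neg).pow k)).div_const _).integrableOn_Ioc
        · filter_upwards [ae_restrict_mem measurableSet_Ioc, ae_restrict_of_ae hbd]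
            with x hx hbx
          have h1 : |x| = -x := abs_of_nonpos hx.2
          have h2 : |x| ≤ α := by
            rw [h1]
            have : -z ≤ α := by rw [abs_of_neg hz0] at hz; exact hz
            linarith [hx.1]
          have := hbx h2
          rw [h1] at this
          simpa using this
      have hcomp : ∫ x in Set.Ioc z 0, d₁ * (-x) ^ k / α ^ k
          = d₁ * (-z) ^ (k + 1) / ((k + 1) * α ^ k) := by
        rw [← intervalIntegral.integral_of_le hz0.le]
        have := intervalIntegral.integral_comp_neg (a := z) (b := 0)
          (fun x => d₁ * x ^ k / α ^ k)
        rw [this, neg_zero]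
        have : ∀ x : ℝ, d₁ * x ^ k / α ^ k = (d₁ / α ^ k) * x ^ k := by
          intro x; ring
        simp_rw [this]
        rw [intervalIntegral.integral_const_mul, integral_pow,
          zero_pow (Nat.succ_ne_zero k), sub_zero, div_mul_div_comm, mul_comm (α ^ k)]
      rw [hgz, abs_neg, abs_of_neg hz0]
      exact hle.trans_eq hcomp
  -- pointwise bound for all z
  have key : ∀ z : ℝ, |z - l' α z| ≤ C * A * |z| ^ k := by
    intro z
    have hzk : (0:ℝ) ≤ |z| ^ k := pow_nonneg (abs_nonneg z) k
    rcases le_or_gt |z| α with hz | hz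
    · have h1 := hsmall z hz
      have h2 : d₁ * |z| ^ (k + 1) / ((k + 1) * α ^ k) ≤ d₁ / (k + 1) * A * |z| ^ k := by
        rw [hA]
        have hzz : |z| ^ (k + 1) ≤ α * |z| ^ k := by
          rw [pow_succ, mul_comm]
          exact mul_le_mul_of_nonneg_right hz hzk
        have heq : d₁ / ((k:ℝ) + 1) * (α / α ^ k) * |z| ^ k
            = d₁ * (α * |z| ^ k) / (((k:ℝ) + 1) * α ^ k) := by
          rw [div_mul_div_comm, div_mul_eq_mul_div]
          congr 1
          ring
        rw [heq]
        gcongr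
        exact h.d₁_pos.le
      have h3 : d₁ / (k + 1) * A * |z| ^ k ≤ C * A * |z| ^ k := by
        apply mul_le_mul_of_nonneg_right _ hzk
        apply mul_le_mul_of_nonneg_right _ hA0
        rw [hCdef]
        linarith [h.k₁_pos]
      exact h1.trans (h2.trans h3)
    · have h1 : |z - l' α z| ≤ (1 + k₁) * |z| := by
        calc |z - l' α z| ≤ |z| + |l' α z| := abs_sub _ _
          _ ≤ |z| + k₁ * α := by linarith [h.deriv_bound α hα z]
          _ ≤ |z| + k₁ * |z| := by
              have := mul_le_mul_of_nonneg_left hz.le h.k₁_pos.le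
              linarith
          _ = (1 + k₁) * |z| := by ring
      have h2 : |z| ≤ A * |z| ^ k := by
        rw [hA]
        rw [div_mul_eq_mul_div, le_div_iff₀ hαk]
        have hk1' : 1 ≤ k := le_trans (by norm_num) h.k_ge_two
        have hpow : α ^ (k - 1) ≤ |z| ^ (k - 1) := pow_le_pow_left₀ hα.le hz.le _
        have hsplit : α ^ k = α * α ^ (k - 1) := by
          rw [← pow_succ']
          congr 1
          omega
        have hsplit' : |z| ^ k = |z| * |z| ^ (k - 1) := by
          rw [← pow_succ']
          congr 1
          omega
        rw [hsplit, hsplit']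
        nlinarith [mul_le_mul_of_nonneg_left hpow (mul_nonneg hα.le (abs_nonneg z))]
      have h3 : (1 + k₁) * |z| ≤ (1 + k₁) * (A * |z| ^ k) :=
        mul_le_mul_of_nonneg_left h2 (by linarith [h.k₁_pos])
      have h4 : (1 + k₁) * (A * |z| ^ k) ≤ C * A * |z| ^ k := by
        have : (1 + k₁) * (A * |z| ^ k) = (1 + k₁) * A * |z| ^ k := by ring
        rw [this]
        apply mul_le_mul_of_nonneg_right _ hzk
        apply mul_le_mul_of_nonneg_right _ hA0
        rw [hCdef]
        have : 0 ≤ d₁ / ((k:ℝ) + 1) := div_nonneg h.d₁_pos.le (by positivity)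
        linarith
      exact h1.trans (h3.trans h4)
  -- integration
  have hmeasf : AEStronglyMeasurable (fun ω => |Z ω - l' α (Z ω)|) μ := by
    apply Measurable.aestronglyMeasurable
    exact (continuous_abs.comp (continuous_id.sub hl'c)).measurable.comp hZmeas
  have hint2 : Integrable (fun ω => C * A * |Z ω| ^ k) μ := hZ.const_mul _
  have hint1 : Integrable (fun ω => |Z ω - l' α (Z ω)|) μ := by
    apply hint2.mono hmeasf
    refine Eventually.of_forall fun ω => ?_
    rw [Real.norm_eq_abs, Real.norm_eq_abs, abs_abs]
    exact (key (Z ω)).trans (le_abs_self _)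
  calc ∫ ω, |Z ω - l' α (Z ω)| ∂μ ≤ ∫ ω, C * A * |Z ω| ^ k ∂μ :=
        integral_mono hint1 hint2 fun ω => key (Z ω)
    _ = C * A * ∫ ω, |Z ω| ^ k ∂μ := by rw [MeasureTheory.integral_const_mul]
    _ = C * A * ∫ ω, |Z ω| ^ k ∂μ := rfl

end
end
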